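/- For a simple graph G on N ≥ 2 vertices, the variance of S_N(π) = ∑_{i=1}^N A_{i,π(i)} over a uniformly random permutation π equals ∑_{i=1}^N d_i(N − d_i)/N² + ∑_{i ≠ j} (d_i d_j − N T_{i,j})/(N²(N−1)), where d_i is the degree of vertex i and T_{i,j} is the scalar product of rows i and j of A. -/

import Mathlib

/-!
Write `S π = ∑ i, A i (π i)` and expand `S² = ∑ i, A i (π i)² + ∑_{i ≠ j} A i (π i) * A j (π j)`.
Summed over all permutations, every term has the form `f (π • x)` with `x` a point or an ordered
pair of distinct points. The symmetric group acts transitively on both, so such a sum is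
`(n - 1)! ∑ₐ f a`, resp. `(n - 2)! ∑_{a ≠ b} f (a, b)`. This computes the first two moments
for an arbitrary matrix `A`; for an adjacency matrix `A² = A` and
`∑_{a ≠ b} A i a * A j b = dᵢ dⱼ - Tᵢⱼ`, and the variance formula is then algebra.
-/

/-- The `(x,y)` entry of the adjacency matrix of `G`, as a rational number. -/
def adjQ (N : ℕ) (G : SimpleGraph (Fin N)) [DecidableRel G.Adj] (x y : Fin N) : ℚ :=
  if G.Adj x y then 1 else 0

open Finset Equiv
open scoped Nat

theorem card_orbit_nsmul_sum_smul {G β M : Type*} [Group G] [Fintype G] [MulAction G β]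
    [AddCommMonoid M] {x : β} {s : Finset β} (hs : ∀ y, y ∈ s ↔ ∃ g : G, g • x = y)
    (f : β → M) : #s • ∑ g : G, f (g • x) = Fintype.card G • ∑ y ∈ s, f y := by
  have h_indep : ∀ y ∈ s, ∑ g : G, f (g • y) = ∑ g : G, f (g • x) := by
    intro y hy
    obtain ⟨h, rfl⟩ := (hs y).1 hy
    simpa [mul_smul] using Equiv.sum_comp (Equiv.mulRight h) (fun g => f (g • x))
  have h_invariant : ∀ g : G, ∑ y ∈ s, f (g • y) = ∑ y ∈ s, f y := by
    intro g
    have h_mem : ∀ g : G, ∀ y ∈ s, g • y ∈ s := by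
      intro g y hy
      obtain ⟨h, rfl⟩ := (hs y).1 hy
      exact (hs _).2 ⟨g * h, mul_smul g h x⟩
    exact sum_nbij' (g • ·) (g⁻¹ • ·) (h_mem g) (h_mem g⁻¹) (fun y _ => inv_smul_smul g y)
      (fun y _ => smul_inv_smul g y) (fun _ _ => rfl)
  calc #s • ∑ g : G, f (g • x) = ∑ y ∈ s, ∑ g : G, f (g • y) := by
        rw [← sum_const, sum_congr rfl h_indep]
    _ = ∑ g : G, ∑ y ∈ s, f y := by
        rw [sum_comm]; exact sum_congr rfl fun g _ => h_invariant g
    _ = Fintype.card G • ∑ y ∈ s, f y := by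
        rw [sum_const, card_univ]

theorem sum_sum_eq_sum_add_sum_offDiag {α M : Type*} [DecidableEq α] [AddCommMonoid M]
    (s : Finset α) (f : α → α → M) :
    ∑ i ∈ s, ∑ j ∈ s, f i j = ∑ i ∈ s, f i i + ∑ p ∈ s.offDiag, f p.1 p.2 := by
  rw [← sum_product', ← diag_union_offDiag, sum_union (disjoint_diag_offDiag s), diag, sum_map]
  rfl

theorem sq_sum_eq_sum_sq_add_sum_offDiag {α R : Type*} [DecidableEq α] [CommSemiring R]
    (s : Finset α) (f : α → R) :
    (∑ i ∈ s, f i) ^ 2 = ∑ i ∈ s, f i ^ 2 + ∑ p ∈ s.offDiag, f p.1 * f p.2 := by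
  rw [sq, sum_mul_sum, sum_sum_eq_sum_add_sum_offDiag]
  simp only [sq]

theorem exists_perm_apply_pair {α : Type*} {i j a b : α} (hij : i ≠ j) (hab : a ≠ b) :
    ∃ π : Perm α, π i = a ∧ π j = b := by
  have inj : ∀ {x y : α}, x ≠ y → Function.Injective ![x, y] := by
    intro x y hxy k l
    fin_cases k <;> fin_cases l <;> simp [hxy, hxy.symm]
  obtain ⟨π, hπ⟩ := Perm.exists_extending_pair _ _ (inj hij) (inj hab)
  exact ⟨π, by simpa using hπ 0, by simpa using hπ 1⟩

section Perm

variable {α R : Type*} [Fintype α] [DecidableEq α]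

local notation "n" => Fintype.card α

theorem card_mul_sum_perm_apply [NonAssocSemiring R] (i : α) (f : α → R) :
    (n : R) * ∑ π : Perm α, f (π i) = (n ! : R) * ∑ a, f a := by
  have := card_orbit_nsmul_sum_smul (G := Perm α) (x := i) (s := univ)
    (fun y => by simpa using MulAction.exists_smul_eq (Perm α) i y) f
  simpa [Fintype.card_perm, nsmul_eq_mul] using this

theorem card_mul_card_sub_one_mul_sum_perm_apply_pair [CommRing R] {i j : α} (hij : i ≠ j)
    (f : α → α → R) :
    (n : R) * (n - 1) * ∑ π : Perm α, f (π i) (π j) =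
      (n ! : R) * ∑ p ∈ univ.offDiag, f p.1 p.2 := by
  have h_orbit : ∀ p : α × α, p ∈ univ.offDiag ↔ ∃ π : Perm α, π • (i, j) = p := by
    rintro ⟨a, b⟩
    simp only [mem_offDiag, mem_univ, true_and, Prod.smul_mk, Perm.smul_def, Prod.mk.injEq]
    exact ⟨fun hab => exists_perm_apply_pair hij hab,
      fun ⟨π, hπi, hπj⟩ => hπi ▸ hπj ▸ π.injective.ne hij⟩
  have h_card : (#(univ.offDiag : Finset (α × α)) : R) = n * (n - 1) := by
    rw [offDiag_card, card_univ, Nat.cast_sub (Nat.le_mul_self n)]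
    push_cast; ring
  have := card_orbit_nsmul_sum_smul h_orbit (fun p => f p.1 p.2)
  rwa [nsmul_eq_mul, nsmul_eq_mul, h_card, Fintype.card_perm] at this

theorem card_mul_sum_perm_sum_apply [NonAssocSemiring R] (A : α → α → R) :
    (n : R) * ∑ π : Perm α, ∑ i, A i (π i) = (n ! : R) * ∑ i, ∑ a, A i a := by
  rw [sum_comm, mul_sum, mul_sum]
  exact sum_congr rfl fun i _ => card_mul_sum_perm_apply i (A i)

theorem card_mul_card_sub_one_mul_sum_perm_sq_sum_apply [CommRing R] (A : α → α → R) :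
    (n : R) * (n - 1) * ∑ π : Perm α, (∑ i, A i (π i)) ^ 2 =
      (n ! : R) * ((n - 1) * ∑ i, ∑ a, A i a ^ 2 +
        ∑ p ∈ univ.offDiag, ((∑ a, A p.1 a) * (∑ b, A p.2 b) - ∑ a, A p.1 a * A p.2 a)) := by
  have h_diag : (n : R) * ∑ π : Perm α, ∑ i, A i (π i) ^ 2 = (n ! : R) * ∑ i, ∑ a, A i a ^ 2 :=
    card_mul_sum_perm_sum_apply fun i a => A i a ^ 2
  have h_offDiag : ∀ p ∈ (univ.offDiag : Finset (α × α)),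
      (n : R) * (n - 1) * ∑ π : Perm α, A p.1 (π p.1) * A p.2 (π p.2) =
        (n ! : R) * ((∑ a, A p.1 a) * (∑ b, A p.2 b) - ∑ a, A p.1 a * A p.2 a) := by
    intro p hp
    rw [card_mul_card_sub_one_mul_sum_perm_apply_pair (mem_offDiag.1 hp).2.2
      (fun a b => A p.1 a * A p.2 b), sum_mul_sum,
      sum_sum_eq_sum_add_sum_offDiag]
    ring
  simp only [sq_sum_eq_sum_sq_add_sum_offDiag, sum_add_distrib]
  rw [sum_comm (t := univ.offDiag), mul_add, mul_sum univ.offDiag, sum_congr rfl h_offDiag,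
    ← mul_sum]
  linear_combination (↑n - 1 : R) * h_diag

end Perm

theorem sum_adjQ_eq_degree (N : ℕ) (G : SimpleGraph (Fin N)) [DecidableRel G.Adj] (i : Fin N) :
    ∑ a, adjQ N G i a = G.degree i := by
  simp [adjQ, sum_boole, SimpleGraph.degree, SimpleGraph.neighborFinset_eq_filter]

theorem adjQ_sq (N : ℕ) (G : SimpleGraph (Fin N)) [DecidableRel G.Adj] (i a : Fin N) :
    adjQ N G i a ^ 2 = adjQ N G i a := by
  unfold adjQ; split_ifs <;> norm_num

theorem variance_formula (N : ℕ) (hN : 2 ≤ N) (G : SimpleGraph (Fin N))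
    [DecidableRel G.Adj] :
    (∑ π : Equiv.Perm (Fin N), (∑ i, adjQ N G i (π i)) ^ 2) / (Nat.factorial N : ℚ) -
        ((∑ π : Equiv.Perm (Fin N), ∑ i, adjQ N G i (π i)) / (Nat.factorial N : ℚ)) ^ 2 =
      (∑ i, (G.degree i : ℚ) * ((N : ℚ) - (G.degree i : ℚ))) / (N : ℚ) ^ 2 +
        (∑ p ∈ Finset.univ.filter (fun p : Fin N × Fin N => p.1 ≠ p.2),
            ((G.degree p.1 : ℚ) * (G.degree p.2 : ℚ) -
              (N : ℚ) * ∑ k, adjQ N G p.1 k * adjQ N G p.2 k)) /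
          ((N : ℚ) ^ 2 * ((N : ℚ) - 1)) := by
  have h_first := card_mul_sum_perm_sum_apply (adjQ N G)
  have h_second := card_mul_card_sub_one_mul_sum_perm_sq_sum_apply (adjQ N G)
  have h_degrees := sq_sum_eq_sum_sq_add_sum_offDiag univ fun i => (G.degree i : ℚ)
  simp only [Fintype.card_fin, adjQ_sq, sum_adjQ_eq_degree] at h_first h_second
  have h_filter : univ.filter (fun p : Fin N × Fin N => p.1 ≠ p.2) = univ.offDiag := by
    ext; simp
  have hN0 : (N : ℚ) ≠ 0 := Nat.cast_ne_zero.2 (by omega)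
  have hN1 : (N : ℚ) - 1 ≠ 0 := sub_ne_zero.2 (by exact_mod_cast (by omega : N ≠ 1))
  rw [h_filter, eq_div_of_mul_eq hN0 ((mul_comm _ _).trans h_first),
    eq_div_of_mul_eq (mul_ne_zero hN0 hN1) ((mul_comm _ _).trans h_second)]
  simp only [mul_sub, sum_sub_distrib, ← mul_sum, ← sum_mul, ← sq] at h_degrees ⊢
  field_simp
  linear_combination (1 - (N : ℚ)) * h_degrees
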